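/- For every n ∈ ℕ, every 1 ≤ k ≤ n, every strictly increasing j = (j₁,…,j_k) ∈ [k:n] and every I ∈ IS(n): φ^n_k(I, j) = φ^∞_k(n⁻¹I, n⁻¹j), where n⁻¹j := ((2j₁−1)/(2n), …, (2j_k−1)/(2n)). -/

import Mathlib

open TopologicalSpace Filter Set MeasureTheory ProbabilityTheory
open scoped ENNReal symmDiff

noncomputable section

/-- The triangle `▲ = {(x,y) ∈ ℝ² : 0 ≤ x ≤ y ≤ 1}`. -/
def Tri : Set (ℝ × ℝ) := {p | 0 ≤ p.1 ∧ p.1 ≤ p.2 ∧ p.2 ≤ 1}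

/-- The diagonal `Δ = {(x,x) : x ∈ [0,1]}`. -/
def Diag : Set (ℝ × ℝ) := {p | ∃ x : ℝ, 0 ≤ x ∧ x ≤ 1 ∧ p = (x, x)}

/-- Membership in `IS(∞)`: compact subsets of the triangle containing the diagonal. -/
def MemISinf (K : Set (ℝ × ℝ)) : Prop := IsCompact K ∧ K ⊆ Tri ∧ Diag ⊆ K

/-- `IsIS n I`: `I` is an interval system on `[n] = {1,…,n}`: it contains `∅` and all
singletons `{j}`, `j ∈ [n]`, and every nonempty element is an interval `[a,b] ⊆ [n]`. -/
def IsIS (n : ℕ) (I : Set (Finset ℕ)) : Prop :=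
  (∅ : Finset ℕ) ∈ I ∧ (∀ j : ℕ, 1 ≤ j → j ≤ n → ({j} : Finset ℕ) ∈ I) ∧
    ∀ e ∈ I, e ≠ (∅ : Finset ℕ) → ∃ a b : ℕ, 1 ≤ a ∧ a ≤ b ∧ b ≤ n ∧ e = Finset.Icc a b

/-- Extension of a vector `(u₁,…,u_k)` by the conventions `u₀ := -1`, `u_{k+1} := 2`. -/
def uext (k : ℕ) (u : ℕ → ℝ) : ℕ → ℝ := fun i => if i = 0 then -1 else if i ≤ k then u i else 2

/-- The sampling map `φ^∞_k`: it contains `∅`, all singletons, and exactly those intervals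
`[a,b]`, `1 ≤ a < b ≤ k`, for which `K ∩ (u_{a-1},u_a) × (u_b,u_{b+1}) ≠ ∅`. -/
def phiInf (k : ℕ) (K : Set (ℝ × ℝ)) (u : ℕ → ℝ) : Set (Finset ℕ) :=
  {e | e = (∅ : Finset ℕ)} ∪ {e | ∃ j : ℕ, 1 ≤ j ∧ j ≤ k ∧ e = {j}} ∪
    {e | ∃ a b : ℕ, 1 ≤ a ∧ a < b ∧ b ≤ k ∧ e = Finset.Icc a b ∧
      ∃ p ∈ K, uext k u (a - 1) < p.1 ∧ p.1 < uext k u a ∧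
        uext k u b < p.2 ∧ p.2 < uext k u (b + 1)}

/-- Extension of `(j₁,…,j_k) ∈ [k:n]` by the conventions `j₀ := -n`, `j_{k+1} := 2n`. -/
def jext (n k : ℕ) (j : ℕ → ℕ) : ℕ → ℤ :=
  fun i => if i = 0 then -(n : ℤ) else if i ≤ k then (j i : ℤ) else 2 * n

/-- The finite sampling map `φ^n_k`: `[a,b] ∈ φ^n_k(I,j)` iff some `[A,B] ∈ I` satisfies
`j_{a-1} < A ≤ j_a ≤ j_b ≤ B < j_{b+1}`; together with `∅`. -/
def phiFin (n k : ℕ) (I : Set (Finset ℕ)) (j : ℕ → ℕ) : Set (Finset ℕ) :=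
  {e | e = (∅ : Finset ℕ)} ∪
    {e | ∃ a b : ℕ, 1 ≤ a ∧ a ≤ b ∧ b ≤ k ∧ e = Finset.Icc a b ∧
      ∃ A B : ℕ, A ≤ B ∧ Finset.Icc A B ∈ I ∧
        jext n k j (a - 1) < (A : ℤ) ∧ (A : ℤ) ≤ jext n k j a ∧
        jext n k j a ≤ jext n k j b ∧ jext n k j b ≤ (B : ℤ) ∧ (B : ℤ) < jext n k j (b + 1)}

/-- Removing the element `k` from the interval `[a,b]`: it becomes `[a-1,b-1]` if `k < a`,
`[a,b-1]` if `a ≤ k ≤ b`, and stays `[a,b]` if `b < k`. -/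
def eraseElem (k a b : ℕ) : Finset ℕ :=
  if b < k then Finset.Icc a b else if k < a then Finset.Icc (a - 1) (b - 1) else Finset.Icc a (b - 1)

/-- The one-step erasing map `φ^{n+1}_n(⬝, k)`, removing `k` from every interval. -/
def phiStep (I : Set (Finset ℕ)) (k : ℕ) : Set (Finset ℕ) :=
  {e | e = (∅ : Finset ℕ)} ∪
    {e | ∃ a b : ℕ, a ≤ b ∧ Finset.Icc a b ∈ I ∧ e = eraseElem k a b}

/-- The scaled interval system `n⁻¹I = {((a-1)/n, b/n) : ∅ ≠ [a,b] ∈ I} ∪ Δ ⊆ ▲`. -/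
def scaleIS (n : ℕ) (I : Set (Finset ℕ)) : Set (ℝ × ℝ) :=
  {p | ∃ a b : ℕ, 1 ≤ a ∧ a ≤ b ∧ Finset.Icc a b ∈ I ∧
        p = (((a : ℝ) - 1) / n, (b : ℝ) / n)} ∪ Diag

/-- `orderStat k u i` : the `i`-th smallest among `u 1, …, u k`  (for `1 ≤ i ≤ k`). -/
def orderStat (k : ℕ) (u : ℕ → ℝ) (i : ℕ) : ℝ :=
  (Multiset.sort (Multiset.map u (Finset.Icc 1 k).val) (· ≤ ·)).getD (i - 1) 0

/-- The ℓ¹-distance `d((x₁,y₁),(x₂,y₂)) = |x₁-x₂| + |y₁-y₂|` on `ℝ²`. -/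
def dist1 (p q : ℝ × ℝ) : ℝ := |p.1 - q.1| + |p.2 - q.2|

/-- The Hausdorff distance associated with the ℓ¹-distance on `ℝ²`. -/
def hd1 (K L : Set (ℝ × ℝ)) : ℝ :=
  max (sSup ((fun p => sInf (dist1 p '' L)) '' K))
      (sSup ((fun p => sInf (dist1 p '' K)) '' L))

/-- `enumOf s r` : the `r`-th smallest element of the finite set `s` (`1`-based). -/
def enumOf (s : Finset ℕ) (r : ℕ) : ℕ := (s.sort (· ≤ ·)).getD (r - 1) 0

/-!
The sample point `(2j - 1)/(2n)` is the midpoint of the `j`-th cell `[(j-1)/n, j/n]`, so it never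
meets the grid `n⁻¹ℤ`, and for an integer `c` we have `c/n < (2j-1)/(2n) ↔ c < j`. Hence each of
the four strict inequalities placing the grid point `((A-1)/n, B/n)` of `[A,B] ∈ I` in the box
`(u_{a-1},u_a) × (u_b,u_{b+1})` is one of the four inequalities `j_{a-1} < A ≤ j_a`,
`j_b ≤ B < j_{b+1}`; the boundary conventions `u₀ = -1`, `u_{k+1} = 2` and `j₀ = -n`, `j_{k+1} = 2n`
lie beyond the grid on the same side. Points of the diagonal never lie in a box with `a < b`,
which sits strictly above it, and singletons correspond to `{j_i} ∈ I`.
-/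

/-- The paper's `n⁻¹j`. -/
def cellMidpoint (n : ℕ) (j : ℕ → ℕ) (i : ℕ) : ℝ := (2 * (j i : ℝ) - 1) / (2 * n)

section Midpoints

variable {n : ℕ}

lemma int_div_lt_midpoint_iff (hn : 0 < n) (c m : ℤ) :
    (c : ℝ) / n < (2 * m - 1) / (2 * n) ↔ c < m := by
  have hn' : (0 : ℝ) < n := by exact_mod_cast hn
  rw [div_lt_div_iff₀ hn' (by positivity), show (2 * m - 1) * (n : ℝ) = (2 * m - 1 : ℤ) * n by
    push_cast; ring, show (c : ℝ) * (2 * n) = (2 * c : ℤ) * n by push_cast; ring,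
    mul_lt_mul_iff_left₀ hn', Int.cast_lt]
  omega

lemma midpoint_lt_int_div_iff (hn : 0 < n) (c m : ℤ) :
    (2 * m - 1) / (2 * n) < (c : ℝ) / n ↔ m ≤ c := by
  have hn' : (0 : ℝ) < n := by exact_mod_cast hn
  rw [div_lt_div_iff₀ (by positivity) hn', show (2 * m - 1) * (n : ℝ) = (2 * m - 1 : ℤ) * n by
    push_cast; ring, show (c : ℝ) * (2 * n) = (2 * c : ℤ) * n by push_cast; ring,
    mul_lt_mul_iff_left₀ hn', Int.cast_lt]
  omega

variable {k : ℕ} {j : ℕ → ℕ}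

lemma int_div_lt_uext_iff (hn : 0 < n) {c : ℤ} (hc₀ : 0 ≤ c) (hcn : c ≤ n) (i : ℕ) :
    (c : ℝ) / n < uext k (cellMidpoint n j) i ↔ c < jext n k j i := by
  have hc : (0 : ℝ) ≤ c / n ∧ (c : ℝ) / n ≤ 1 :=
    ⟨by positivity, div_le_one_of_le₀ (by exact_mod_cast hcn) (by positivity)⟩
  unfold uext jext
  split_ifs
  · constructor <;> intro <;> linarith
  · have := int_div_lt_midpoint_iff hn c (j i)
    push_cast at this
    exact this
  · constructor <;> intro <;> linarith

lemma uext_lt_int_div_iff (hn : 0 < n) {c : ℤ} (hc₀ : 0 ≤ c) (hcn : c ≤ n) (i : ℕ) :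
    uext k (cellMidpoint n j) i < (c : ℝ) / n ↔ jext n k j i ≤ c := by
  have hc : (0 : ℝ) ≤ c / n ∧ (c : ℝ) / n ≤ 1 :=
    ⟨by positivity, div_le_one_of_le₀ (by exact_mod_cast hcn) (by positivity)⟩
  unfold uext jext
  split_ifs
  · constructor <;> intro <;> linarith
  · have := midpoint_lt_int_div_iff hn c (j i)
    push_cast at this
    exact this
  · constructor <;> intro <;> linarith

lemma cellMidpoint_lt_cellMidpoint_iff (hn : 0 < n) {a b : ℕ} :
    cellMidpoint n j a < cellMidpoint n j b ↔ j a < j b := by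
  unfold cellMidpoint
  rw [div_lt_div_iff_of_pos_right (by positivity), sub_lt_sub_iff_right,
    mul_lt_mul_iff_right₀ two_pos, Nat.cast_lt]

lemma gridPoint_mem_box_iff (hn : 0 < n) {A B : ℕ} (hA : 1 ≤ A) (hAB : A ≤ B) (hB : B ≤ n)
    (a b : ℕ) :
    (uext k (cellMidpoint n j) (a - 1) < ((A : ℝ) - 1) / n ∧
        ((A : ℝ) - 1) / n < uext k (cellMidpoint n j) a ∧
        uext k (cellMidpoint n j) b < (B : ℝ) / n ∧
        (B : ℝ) / n < uext k (cellMidpoint n j) (b + 1)) ↔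
      (jext n k j (a - 1) < A ∧ (A : ℤ) ≤ jext n k j a ∧
        jext n k j b ≤ B ∧ (B : ℤ) < jext n k j (b + 1)) := by
  have hA' : (A : ℝ) - 1 = ((A - 1 : ℤ) : ℝ) := by push_cast; ring
  have hB' : (B : ℝ) = ((B : ℤ) : ℝ) := rfl
  rw [hA', hB', uext_lt_int_div_iff hn (by omega) (by omega),
    int_div_lt_uext_iff hn (by omega) (by omega), uext_lt_int_div_iff hn (by omega) (by omega),
    int_div_lt_uext_iff hn (by omega) (by omega)]
  omega

end Midpoints

lemma uext_of_mem {k : ℕ} (u : ℕ → ℝ) {i : ℕ} (hi : 1 ≤ i) (hik : i ≤ k) : uext k u i = u i := by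
  rw [uext, if_neg (by omega), if_pos hik]

lemma jext_of_mem (n : ℕ) {k : ℕ} (j : ℕ → ℕ) {i : ℕ} (hi : 1 ≤ i) (hik : i ≤ k) :
    jext n k j i = j i := by
  rw [jext, if_neg (by omega), if_pos hik]

lemma jext_strictMonoOn {n k : ℕ} {j : ℕ → ℕ} (hn : 0 < n) (hj : StrictMonoOn j (Set.Icc 1 k))
    (hjval : ∀ i, 1 ≤ i → i ≤ k → 1 ≤ j i ∧ j i ≤ n) :
    StrictMonoOn (jext n k j) (Set.Icc 0 (k + 1)) := by
  rintro x ⟨-, hxk⟩ y ⟨-, hyk⟩ hxy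
  have hx := hjval x
  have hy := hjval y
  have hjxy : 1 ≤ x → y ≤ k → j x < j y := fun h1 h2 =>
    hj ⟨h1, by omega⟩ ⟨by omega, h2⟩ hxy
  unfold jext
  split_ifs <;> omega

lemma IsIS.one_le_and_le_of_Icc_mem {n : ℕ} {I : Set (Finset ℕ)} (hI : IsIS n I) {A B : ℕ}
    (hAB : A ≤ B) (hmem : Finset.Icc A B ∈ I) : 1 ≤ A ∧ B ≤ n := by
  obtain ⟨a, b, ha, -, hb, he⟩ :=
    hI.2.2 _ hmem (Finset.nonempty_Icc.mpr hAB).ne_empty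
  have := (Finset.Icc_subset_Icc_iff hAB).mp he.le
  omega

section Sampling

variable {n k : ℕ} {I : Set (Finset ℕ)} {j : ℕ → ℕ}

lemma phiFin_subset_phiInf (hn : 0 < n) (hI : IsIS n I) :
    phiFin n k I j ⊆ phiInf k (scaleIS n I) (cellMidpoint n j) := by
  rintro e (he | ⟨a, b, ha, hab, hbk, rfl, A, B, hAB, hmem, h₁, h₂, -, h₄, h₅⟩)
  · exact Or.inl (Or.inl he)
  obtain ⟨hA, hB⟩ := hI.one_le_and_le_of_Icc_mem hAB hmem
  rcases hab.eq_or_lt with rfl | hab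
  · exact Or.inl (Or.inr ⟨a, ha, hbk, Finset.Icc_self a⟩)
  refine Or.inr ⟨a, b, ha, hab, hbk, rfl, _, Or.inl ⟨A, B, hA, hAB, hmem, rfl⟩, ?_⟩
  exact (gridPoint_mem_box_iff hn hA hAB hB a b).mpr ⟨h₁, h₂, h₄, h₅⟩

lemma phiInf_subset_phiFin (hn : 0 < n) (hI : IsIS n I) (hj : StrictMonoOn j (Set.Icc 1 k))
    (hjval : ∀ i, 1 ≤ i → i ≤ k → 1 ≤ j i ∧ j i ≤ n) :
    phiInf k (scaleIS n I) (cellMidpoint n j) ⊆ phiFin n k I j := by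
  have hjext := jext_strictMonoOn hn hj hjval
  have hjext_mem {i : ℕ} (hi : i ≤ k + 1) : i ∈ Set.Icc 0 (k + 1) := ⟨i.zero_le, hi⟩
  rintro e ((he | ⟨i, hi, hik, rfl⟩) | ⟨a, b, ha, hab, hbk, rfl, p, hp, hbox⟩)
  · exact Or.inl he
  · obtain ⟨hji, hjn⟩ := hjval i hi hik
    have hjext_i := jext_of_mem n j hi hik
    refine Or.inr ⟨i, i, hi, le_rfl, hik, (Finset.Icc_self i).symm, j i, j i, le_rfl,
      by rw [Finset.Icc_self]; exact hI.2.1 _ hji hjn, ?_, hjext_i.ge, le_rfl, hjext_i.le, ?_⟩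
    · exact hjext_i ▸ hjext (hjext_mem (by omega)) (hjext_mem (by omega)) (by omega)
    · exact hjext_i ▸ hjext (hjext_mem (by omega)) (hjext_mem (by omega)) (by omega)
  rcases hp with ⟨A, B, hA, hAB, hmem, rfl⟩ | ⟨x, -, -, rfl⟩
  · obtain ⟨h₁, h₂, h₄, h₅⟩ :=
      (gridPoint_mem_box_iff hn hA hAB (hI.one_le_and_le_of_Icc_mem hAB hmem).2 a b).mp hbox
    exact Or.inr ⟨a, b, ha, hab.le, hbk, rfl, A, B, hAB, hmem, h₁, h₂,
      (hjext (hjext_mem (by omega)) (hjext_mem (by omega)) hab).le, h₄, h₅⟩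
  · obtain ⟨-, hxa, hbx, -⟩ := hbox
    have hak : a ≤ k := by omega
    rw [uext_of_mem _ ha hak] at hxa
    rw [uext_of_mem _ (by omega) hbk] at hbx
    have := (cellMidpoint_lt_cellMidpoint_iff hn).mpr (hj ⟨ha, hak⟩ ⟨by omega, hbk⟩ hab)
    linarith

end Sampling

/-- For every `1 ≤ k ≤ n`, every strictly increasing `j ∈ [k:n]` and every
`I ∈ IS(n)` : `φ^n_k(I, j) = φ^∞_k(n⁻¹I, n⁻¹j)` where `n⁻¹j = ((2j₁-1)/(2n),…,(2j_k-1)/(2n))`. -/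
theorem stmt3 (n k : ℕ) (hk : 1 ≤ k) (hkn : k ≤ n)
    (I : Set (Finset ℕ)) (hI : IsIS n I)
    (j : ℕ → ℕ) (hjmono : StrictMonoOn j (Set.Icc 1 k))
    (hjval : ∀ i, 1 ≤ i → i ≤ k → 1 ≤ j i ∧ j i ≤ n) :
    phiFin n k I j = phiInf k (scaleIS n I) (fun i => (2 * (j i : ℝ) - 1) / (2 * n)) := by
  have hn : 0 < n := hk.trans hkn
  exact (phiFin_subset_phiInf hn hI).antisymm (phiInf_subset_phiFin hn hI hjmono hjval)
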